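/- Let G = (K, I; E) be a split graph and let S be a c-colorable set with |S| ≥ k. Then S ⊆ T_{S ∩ K}, where T_C = C ∪ I if |C| < c and T_C = C ∪ (I \ {u ∈ I : C ⊆ N(u)}) if |C| = c; consequently S is reachable from T_{S ∩ K} under TAR(k) by adding vertices one by one. -/

import Mathlib

/-!
A vertex `u ∈ I ∩ S` adjacent to all of `C = S ∩ K` would make `C ∪ {u}` a clique of size
`|C| + 1` inside the `c`-colourable set `S`, so `|C| < c`: hence `S ⊆ T_C`. The set `T_C` is
`c`-colourable: colour `C` injectively, and give `I` a spare colour when `|C| < c`, or give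
each remaining `u ∈ I` the colour of a non-neighbour of `u` in `C` when `|C| = c`. Adding the
vertices of `T_C \ S` one at a time then only passes through subsets of `T_C` of size at
least `|S| ≥ k`.
-/

open Finset

variable {V : Type*}

/-- `S` is a `c`-colorable vertex set in `G`. -/
def ColSet (G : SimpleGraph V) (c : ℕ) (S : Finset V) : Prop :=
  (G.induce (S : Set V)).Colorable c

/-- One TAR(k) step between `c`-colorable sets. -/
def TARStep (G : SimpleGraph V) (c k : ℕ) [DecidableEq V] (A B : Finset V) : Prop :=
  ColSet G c A ∧ ColSet G c B ∧ k ≤ A.card ∧ k ≤ B.card ∧ (symmDiff A B).card = 1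

/-- One TJ step between `c`-colorable sets. -/
def TJStep (G : SimpleGraph V) (c : ℕ) [DecidableEq V] (A B : Finset V) : Prop :=
  ColSet G c A ∧ ColSet G c B ∧ (A \ B).card = 1 ∧ (B \ A).card = 1

/-- `l` is a TAR(k)-reconfiguration sequence from `S` to `S'`. -/
def TARSeq (G : SimpleGraph V) (c k : ℕ) [DecidableEq V] (S S' : Finset V)
    (l : List (Finset V)) : Prop :=
  l.head? = some S ∧ l.getLast? = some S' ∧ l.Chain' (TARStep G c k)

def TJSeq (G : SimpleGraph V) (c : ℕ) [DecidableEq V] (S S' : Finset V)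
    (l : List (Finset V)) : Prop :=
  l.head? = some S ∧ l.getLast? = some S' ∧ l.Chain' (TJStep G c)

def TARReach (G : SimpleGraph V) (c k : ℕ) [DecidableEq V] (S S' : Finset V) : Prop :=
  ∃ l, TARSeq G c k S S' l

/-- For a split graph with independent part `I`, the canonical maximal `c`-colorable
set with clique part `C`. -/
def splitTC (G : SimpleGraph V) [DecidableEq V] [DecidableRel G.Adj]
    (c : ℕ) (I C : Finset V) : Finset V :=
  if C.card < c then C ∪ I
  else C ∪ I.filter (fun u => ¬ ∀ v ∈ C, G.Adj v u)

namespace ColSet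

variable {G : SimpleGraph V} {c : ℕ}

theorem mono {A B : Finset V} (hAB : A ⊆ B) (hB : ColSet G c B) : ColSet G c A :=
  let ⟨f⟩ := hB
  ⟨SimpleGraph.Coloring.mk (fun v => f ⟨v.1, hAB v.2⟩) fun h => f.valid h⟩

theorem card_le_of_isClique {S D : Finset V} (hS : ColSet G c S) (hDS : D ⊆ S)
    (hD : G.IsClique (D : Set V)) : D.card ≤ c := by
  simpa using hS.card_le_of_pairwise_adj (fun d : D => (⟨d, hDS d.2⟩ : (S : Set V)))
    fun d d' hne => hD d.2 d'.2 (Subtype.coe_ne_coe.2 hne)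

theorem of_map {β : Type*} [DecidableEq β] {S : Finset V} (ψ : V → β)
    (hcard : (S.image ψ).card ≤ c) (hψ : ∀ x ∈ S, ∀ y ∈ S, G.Adj x y → ψ x ≠ ψ y) :
    ColSet G c S :=
  (SimpleGraph.Coloring.mk (fun v : (S : Set V) => (⟨ψ v, mem_image_of_mem ψ v.2⟩ : S.image ψ))
    fun {x y} h heq => hψ x x.2 y y.2 h (congrArg Subtype.val heq)).colorable.mono
    (by simpa using hcard)

theorem union_of_injOn [DecidableEq V] {β : Type*} [DecidableEq β] {C J : Finset V} (ψ : V → β)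
    (hψC : Set.InjOn ψ C) (hJ : G.IsIndepSet J)
    (hψCJ : ∀ x ∈ C, ∀ u ∈ J, G.Adj x u → ψ x ≠ ψ u)
    (hcard : ((C ∪ J).image ψ).card ≤ c) : ColSet G c (C ∪ J) := by
  refine of_map ψ hcard fun x hx y hy hxy => ?_
  rcases mem_union.1 hx with hxC | hxJ <;> rcases mem_union.1 hy with hyC | hyJ
  · exact hψC.ne hxC hyC (G.ne_of_adj hxy)
  · exact hψCJ x hxC y hyJ hxy
  · exact (hψCJ y hyC x hxJ hxy.symm).symm
  · exact absurd hxy (hJ hxJ hyJ (G.ne_of_adj hxy))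

theorem union_of_card_lt [DecidableEq V] {C J : Finset V} (hJ : G.IsIndepSet J)
    (hC : C.card < c) : ColSet G c (C ∪ J) := by
  refine union_of_injOn (fun v => if v ∈ C then some v else none) (fun x hx y hy h => ?_) hJ
    (fun x hx u _ hxu => ?_) ?_
  · simpa [mem_coe.1 hx, mem_coe.1 hy] using h
  · by_cases hu : u ∈ C <;> simp [hx, hu, G.ne_of_adj hxu]
  · calc ((C ∪ J).image _).card ≤ (insert none (C.image some)).card := by
          refine card_le_card fun o ho => ?_
          obtain ⟨v, -, rfl⟩ := mem_image.1 ho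
          by_cases hv : v ∈ C <;> simp [hv]
      _ ≤ C.card + 1 :=
          (card_insert_le _ _).trans (by simp [card_image_of_injective _ (Option.some_injective V)])
      _ ≤ c := hC

/-- Colour every vertex by a non-neighbour of it in `C`; on the clique `C` this is the identity. -/
theorem union_of_isClique [DecidableEq V] {C J : Finset V} (hC : G.IsClique (C : Set V))
    (hCc : C.card ≤ c) (hJ : G.IsIndepSet J) (hJC : ∀ u ∈ J, ∃ w ∈ C, ¬ G.Adj w u) :
    ColSet G c (C ∪ J) := by
  classical
  have hex : ∀ u ∈ C ∪ J, ∃ w ∈ C, ¬ G.Adj w u := by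
    intro u hu
    rcases mem_union.1 hu with huC | huJ
    · exact ⟨u, huC, G.irrefl⟩
    · exact hJC u huJ
  set ψ : V → V := fun v => if h : ∃ w ∈ C, ¬ G.Adj w v then h.choose else v
  have hψ : ∀ u ∈ C ∪ J, ψ u ∈ C ∧ ¬ G.Adj (ψ u) u := fun u hu => by
    simpa [ψ, dif_pos (hex u hu)] using (hex u hu).choose_spec
  have hψ_id : ∀ x ∈ C, ψ x = x := fun x hx => by
    by_contra hne
    obtain ⟨hψxC, hψx⟩ := hψ x (mem_union_left _ hx)
    exact hψx (hC hψxC hx hne)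
  refine union_of_injOn ψ (fun x hx y hy h => ?_) hJ (fun x hx u hu hxu h => ?_) ?_
  · rwa [hψ_id x hx, hψ_id y hy] at h
  · rw [hψ_id x hx] at h
    exact (hψ u (mem_union_right _ hu)).2 (h ▸ hxu)
  · refine (card_le_card fun w hw => ?_).trans hCc
    obtain ⟨v, hv, rfl⟩ := mem_image.1 hw
    exact (hψ v hv).1

end ColSet

section splitTC

variable [DecidableEq V] {G : SimpleGraph V} [DecidableRel G.Adj] {c : ℕ} {I : Finset V}

theorem colSet_splitTC {C : Finset V} (hI : G.IsIndepSet I) (hC : G.IsClique (C : Set V))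
    (hCc : C.card ≤ c) : ColSet G c (splitTC G c I C) := by
  unfold splitTC
  split_ifs with hlt
  · exact ColSet.union_of_card_lt hI hlt
  · refine ColSet.union_of_isClique hC hCc (hI.mono (coe_subset.2 (filter_subset _ _)))
      fun u hu => ?_
    simpa using (mem_filter.1 hu).2

theorem subset_splitTC {K S : Finset V} (hK : G.IsClique (K : Set V))
    (hcover : ∀ v : V, v ∈ K ∨ v ∈ I) (hS : ColSet G c S) : S ⊆ splitTC G c I (S ∩ K) := by
  intro v hv
  unfold splitTC
  rcases hcover v with hvK | hvI
  · split_ifs <;> exact mem_union_left _ (mem_inter.2 ⟨hv, hvK⟩)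
  split_ifs with hlt
  · exact mem_union_right _ hvI
  refine mem_union_right _ (mem_filter.2 ⟨hvI, fun hall => ?_⟩)
  have hvC : v ∉ S ∩ K := fun hvC => G.irrefl (hall v hvC)
  have hclique : G.IsClique ((insert v (S ∩ K) : Finset V) : Set V) := by
    rw [coe_insert, SimpleGraph.isClique_insert]
    exact ⟨hK.subset (by simp), fun b hb _ => (hall b hb).symm⟩
  have hcard := hS.card_le_of_isClique (insert_subset hv inter_subset_left) hclique
  rw [card_insert_of_notMem hvC] at hcard
  omega

end splitTC

section TARReach

variable [DecidableEq V] {G : SimpleGraph V} {c k : ℕ}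

theorem tarReach_refl (S : Finset V) : TARReach G c k S S :=
  ⟨[S], rfl, rfl, List.isChain_singleton S⟩

theorem TARReach.cons {A B C : Finset V} (hAB : TARStep G c k A B) (hBC : TARReach G c k B C) :
    TARReach G c k A C := by
  obtain ⟨l, hhead, hlast, hchain⟩ := hBC
  cases l with
  | nil => simp at hhead
  | cons B' l =>
    obtain rfl : B' = B := by simpa using hhead
    exact ⟨A :: B' :: l, rfl, by rwa [List.getLast?_cons_cons],
      List.isChain_cons_cons.2 ⟨hAB, hchain⟩⟩

theorem tarStep_insert {A : Finset V} {a : V} (ha : a ∉ A) (hA : ColSet G c (insert a A))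
    (hk : k ≤ A.card) : TARStep G c k A (insert a A) := by
  refine ⟨hA.mono (subset_insert a A), hA, hk, hk.trans (card_le_card (subset_insert a A)), ?_⟩
  rw [symmDiff_of_le (subset_insert a A), insert_sdiff_of_notMem _ ha, sdiff_self]
  rfl

theorem tarReach_union (D : Finset V) :
    ∀ S : Finset V, Disjoint S D → ColSet G c (S ∪ D) → k ≤ S.card →
      TARReach G c k S (S ∪ D) := by
  induction D using Finset.induction_on with
  | empty =>
    intro S _ _ _
    rw [union_empty]
    exact tarReach_refl S
  | insert a D ha ih =>
    intro S hSD hcol hk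
    have haS : a ∉ S := disjoint_right.1 hSD (mem_insert_self a D)
    rw [union_insert, ← insert_union] at hcol ⊢
    refine TARReach.cons (tarStep_insert haS (hcol.mono subset_union_left) hk) (ih _ ?_ hcol ?_)
    · simpa [ha] using (disjoint_insert_right.1 hSD).2
    · exact hk.trans (card_le_card (subset_insert a S))

theorem tarReach_of_subset {S T : Finset V} (hST : S ⊆ T) (hT : ColSet G c T)
    (hk : k ≤ S.card) : TARReach G c k S T := by
  simpa [union_sdiff_of_subset hST] using
    tarReach_union (T \ S) S disjoint_sdiff (by rwa [union_sdiff_of_subset hST]) hk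

end TARReach

theorem subset_splitTC_and_reachable_general {V : Type*} [DecidableEq V] (G : SimpleGraph V)
    [DecidableRel G.Adj] (K I : Finset V)
    (hclique : G.IsClique K) (hindep : ∀ u ∈ I, ∀ v ∈ I, ¬ G.Adj u v)
    (hcover : ∀ v : V, v ∈ K ∨ v ∈ I) (c k : ℕ)
    (S : Finset V) (hS : ColSet G c S) (hk : k ≤ S.card) :
    S ⊆ splitTC G c I (S ∩ K) ∧ TARReach G c k S (splitTC G c I (S ∩ K)) := by
  have hC : G.IsClique ((S ∩ K : Finset V) : Set V) := hclique.subset (by simp)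
  have hsub : S ⊆ splitTC G c I (S ∩ K) := subset_splitTC hclique hcover hS
  have hT : ColSet G c (splitTC G c I (S ∩ K)) :=
    colSet_splitTC (fun u hu v hv _ => hindep u hu v hv) hC
      (hS.card_le_of_isClique inter_subset_left hC)
  exact ⟨hsub, tarReach_of_subset hsub hT hk⟩

theorem subset_splitTC_and_reachable {V : Type*} [DecidableEq V] (G : SimpleGraph V)
    [DecidableRel G.Adj] (K I : Finset V)
    (hclique : G.IsClique K) (hindep : ∀ u ∈ I, ∀ v ∈ I, ¬ G.Adj u v)
    (hdisj : Disjoint K I) (hcover : ∀ v : V, v ∈ K ∨ v ∈ I) (c k : ℕ)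
    (S : Finset V) (hS : ColSet G c S) (hk : k ≤ S.card) :
    S ⊆ splitTC G c I (S ∩ K) ∧ TARReach G c k S (splitTC G c I (S ∩ K)) :=
  subset_splitTC_and_reachable_general G K I hclique hindep hcover c k S hS hk
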